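/- arXiv:1412.5781 — 2 statements merged into one kernel-verified Lean document; each statement's English description precedes it below -/
import Mathlib

section
/- For every subset D of U^{|z|}, D is approximable by some formula φ(x,z) if and only if D is externally definable, i.e., there exist a global type p ∈ S_x(U) and a formula φ(x,z) such that D = {a ∈ U^{|z|} : φ(x,a) ∈ p}. -/
namespace Paper

open FirstOrder Language Cardinal Set

universe u

variable (L : FirstOrder.Language.{u, u}) (U : Type u) [iS : L.Structure U]

/-- A language consisting of a single `n`-ary relation symbol. -/
def predLang (n : ℕ) : FirstOrder.Language.{u, u} where
  Functions := fun _ => PEmpty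
  Relations := fun m => ULift (PLift (m = n))

/-- The language `L` together with one new `n`-ary relation symbol. -/
def expLang (n : ℕ) : FirstOrder.Language.{u, u} := L.sum (predLang n)

/-- The expansion `⟨U, D⟩` of `U` by a predicate for `D ⊆ U^n`. -/
def expStr {n : ℕ} (D : Set (Fin n → U)) : (expLang L n).Structure U where
  funMap := fun {_} f x =>
    match f with
    | Sum.inl f => Structure.funMap f x
    | Sum.inr f => f.elim
  RelMap := fun {_} r x =>
    match r with
    | Sum.inl r => Structure.RelMap r x
    | Sum.inr h => (x ∘ Fin.cast h.down.down.symm) ∈ D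

/-- Add the elements of `A : Set U` as constants to an arbitrary structure on `U`. -/
def addConsts {L' : FirstOrder.Language.{u, u}} (S : L'.Structure U) (A : Set U) :
    (L'[[↥A]]).Structure U :=
  letI := S
  letI : (constantsOn ↥A).Structure U := constantsOn.structure Subtype.val
  Language.sumStructure _ _ _

/-- Add all elements of `U` as constants to an arbitrary structure on `U`. -/
def addAllConsts {L' : FirstOrder.Language.{u, u}} (S : L'.Structure U) :
    (L'[[U]]).Structure U :=
  letI := S
  letI : (constantsOn U).Structure U := constantsOn.structure id
  Language.sumStructure _ _ _

/-- Realization of a formula with respect to an explicitly given structure. -/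
def FRealize {L' : FirstOrder.Language.{u, u}} (S : L'.Structure U) {α : Type*}
    (φ : L'.Formula α) (v : α → U) : Prop :=
  @Formula.Realize L' U S α φ v

/-- Realization of a sentence with respect to an explicitly given structure. -/
def SentRealize {L' : FirstOrder.Language.{u, u}} (S : L'.Structure U) (φ : L'.Sentence) : Prop :=
  @Sentence.Realize L' U S φ

/-- A structure on `U` is saturated if every type over a parameter set of cardinality `< #U`
which is finitely realized is realized. -/
def IsSatStr {L' : FirstOrder.Language.{u, u}} (S : L'.Structure U) : Prop :=
  ∀ A : Set U, #A < #U → ∀ (m : ℕ) (p : Set ((L'[[↥A]]).Formula (Fin m))),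
    (∀ s : Finset ((L'[[↥A]]).Formula (Fin m)), ↑s ⊆ p →
      ∃ b : Fin m → U, ∀ φ ∈ s, FRealize U (addConsts U S A) φ b) →
    ∃ b : Fin m → U, ∀ φ ∈ p, FRealize U (addConsts U S A) φ b

/-- `D ⊆ U^n` is saturated if the expansion `⟨U, D⟩` is a saturated structure. -/
def SatSet {n : ℕ} (D : Set (Fin n → U)) : Prop :=
  IsSatStr U (expStr L U D)

/-- `⟨U,C⟩ ≡_A ⟨U,D⟩` : the two expansions satisfy the same sentences with parameters in `A`. -/
def EqvOver {n : ℕ} (A : Set U) (C D : Set (Fin n → U)) : Prop :=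
  ∀ φ : ((expLang L n)[[↥A]]).Sentence,
    SentRealize U (addConsts U (expStr L U C) A) φ ↔
      SentRealize U (addConsts U (expStr L U D) A) φ

/-- `e(D/A)`, the class of all `C` with `⟨U,C⟩ ≡_A ⟨U,D⟩`. -/
def eSet {n : ℕ} (A : Set U) (D : Set (Fin n → U)) : Set (Set (Fin n → U)) :=
  {C | EqvOver L U A C D}

/-- The group `Aut(U/A)` of automorphisms of `U` fixing `A` pointwise (as a set). -/
def AutFix (A : Set U) : Set (U ≃[L] U) :=
  {f | ∀ a ∈ A, f a = a}

/-- The image of a set of tuples under an automorphism. -/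
def imgSet {n : ℕ} (f : U ≃[L] U) (D : Set (Fin n → U)) : Set (Fin n → U) :=
  (fun b => ⇑f ∘ b) '' D

/-- The orbit `o(D/A)` of `D` under `Aut(U/A)`. -/
def oSet {n : ℕ} (A : Set U) (D : Set (Fin n → U)) : Set (Set (Fin n → U)) :=
  {C | ∃ f ∈ AutFix L U A, imgSet L U f D = C}

/-- The orbit `o(b/A)` of a tuple `b` under `Aut(U/A)`. -/
def oTuple {n : ℕ} (A : Set U) (b : Fin n → U) : Set (Fin n → U) :=
  {c | ∃ f ∈ AutFix L U A, ⇑f ∘ b = c}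

/-- A family of sets shatters `B` if every subset of `B` is the trace of a member. -/
def Shatters {α : Type*} (u : Set (Set α)) (B : Set α) : Prop :=
  ∀ H ⊆ B, ∃ D ∈ u, D ∩ B = H

/-- A family of sets has finite VC dimension if for some `N` it shatters no `N`-element set. -/
def FiniteVC {α : Type*} (u : Set (Set α)) : Prop :=
  ∃ N : ℕ, ∀ B : Finset α, B.card = N → ¬Shatters u ↑B

/-- `B^{|z|}`, the set of tuples with coordinates in `B`. -/
def tuplesIn {n : ℕ} (B : Set U) : Set (Fin n → U) :=
  {a | ∀ i, a i ∈ B}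

/-- `φ(b, U)`, the set defined by `φ(x,z)` with `x ↦ b`. -/
def phiSet {m n : ℕ} (φ : L.Formula (Fin m ⊕ Fin n)) (b : Fin m → U) :
    Set (Fin n → U) :=
  {a | φ.Realize (Sum.elim b a)}

/-- `D` is approximable by `φ(x,z)` : every finite trace of `D` is the trace of
some instance `φ(b,U)`. -/
def ApproxBy {n : ℕ} (D : Set (Fin n → U)) {m : ℕ} (φ : L.Formula (Fin m ⊕ Fin n)) : Prop :=
  ∀ B : Finset U, ∃ b : Fin m → U,
    phiSet L U φ b ∩ tuplesIn U ↑B = D ∩ tuplesIn U ↑B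

/-- `D` is approximable from below by `φ(x,z)`. -/
def ApproxBelowBy {n : ℕ} (D : Set (Fin n → U)) {m : ℕ}
    (φ : L.Formula (Fin m ⊕ Fin n)) : Prop :=
  ∀ B : Finset U, ∃ b : Fin m → U,
    phiSet L U φ b ∩ tuplesIn U ↑B = D ∩ tuplesIn U ↑B ∧ phiSet L U φ b ⊆ D

/-- `D` is approximable from above by `φ(x,z)`. -/
def ApproxAboveBy {n : ℕ} (D : Set (Fin n → U)) {m : ℕ}
    (φ : L.Formula (Fin m ⊕ Fin n)) : Prop :=
  ∀ B : Finset U, ∃ b : Fin m → U,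
    phiSet L U φ b ∩ tuplesIn U ↑B = D ∩ tuplesIn U ↑B ∧ D ⊆ phiSet L U φ b

def Approximable {n : ℕ} (D : Set (Fin n → U)) : Prop :=
  ∃ (m : ℕ) (φ : L.Formula (Fin m ⊕ Fin n)), ApproxBy L U D φ

def ApproxBelow {n : ℕ} (D : Set (Fin n → U)) : Prop :=
  ∃ (m : ℕ) (φ : L.Formula (Fin m ⊕ Fin n)), ApproxBelowBy L U D φ

def ApproxAbove {n : ℕ} (D : Set (Fin n → U)) : Prop :=
  ∃ (m : ℕ) (φ : L.Formula (Fin m ⊕ Fin n)), ApproxAboveBy L U D φ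

/-- The formula `φ(x, a)` (an `L(U)`-formula in the variables `x`), obtained by
substituting the tuple `a` for the variables `z` in `φ(x,z)`. -/
def instFormula {m n : ℕ} (φ : L.Formula (Fin m ⊕ Fin n)) (a : Fin n → U) :
    (L[[U]]).Formula (Fin m) :=
  ((L.lhomWithConstants U).onFormula φ).subst
    (Sum.elim (fun i => Term.var i) (fun j => (L.con (a j)).term))

/-- A (complete) global type in the variables `x = (x_0, ..., x_{m-1})` : a maximal
finitely realized set of `L(U)`-formulas. -/
def IsGlobalType {m : ℕ} (p : Set ((L[[U]]).Formula (Fin m))) : Prop :=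
  (∀ s : Finset ((L[[U]]).Formula (Fin m)), ↑s ⊆ p →
    ∃ b : Fin m → U, ∀ φ ∈ s, FRealize U (addAllConsts U iS) φ b) ∧
  ∀ φ : (L[[U]]).Formula (Fin m), φ ∈ p ↔ φ.not ∉ p

/-- `D` is externally definable: `D = {a : φ(x,a) ∈ p}` for some global type `p` and
formula `φ(x,z)`. -/
def ExtDefinable {n : ℕ} (D : Set (Fin n → U)) : Prop :=
  ∃ (m : ℕ) (φ : L.Formula (Fin m ⊕ Fin n)) (p : Set ((L[[U]]).Formula (Fin m))),
    IsGlobalType L U p ∧ D = {a | instFormula L U φ a ∈ p}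

/-- A sequence of `n`-tuples is indiscernible with respect to the formulas of a
structure `S` on `U`. -/
def IndiscIn {L' : FirstOrder.Language.{u, u}} (S : L'.Structure U) {n : ℕ} {I : Type*} [LinearOrder I]
    (a : I → Fin n → U) : Prop :=
  ∀ (k : ℕ) (i j : Fin k → I), StrictMono i → StrictMono j →
    ∀ φ : L'.Formula (Fin k × Fin n),
      FRealize U S φ (fun q => a (i q.1) q.2) ↔ FRealize U S φ (fun q => a (j q.1) q.2)

/-- An `A`-indiscernible sequence of `n`-tuples. -/
def IndiscOver {n : ℕ} (A : Set U) {I : Type*} [LinearOrder I] (a : I → Fin n → U) : Prop :=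
  IndiscIn U (addConsts U iS A) a


/-- `D` is Lascar invariant over `A` : `D` is invariant over every small model containing `A`. -/
def LascarInv {n : ℕ} (A : Set U) (D : Set (Fin n → U)) : Prop :=
  ∀ M : L.ElementarySubstructure U, A ⊆ (M : L.Substructure U) →
    #((M : L.Substructure U) : Set U) < #U →
    ∀ f ∈ AutFix L U ((M : L.Substructure U) : Set U), imgSet L U f D = D

/-- The cardinality of the set `L(A)` of formulas with parameters in `A`. -/
def formulaCard (A : Set U) : Cardinal.{u} :=
  #(Σ k : ℕ, (L[[↥A]]).Formula (Fin k))

/-- `u` locally covers `B` (relative to the cardinal `κ`). -/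
def LocallyCovers {α : Type u} (κ : Cardinal.{u}) (u : Set (Set α)) (B : Set α) : Prop :=
  ∀ K : Set α, K ⊆ B → #K = κ → ∀ k : ℕ, ∃ D ∈ u, (k : Cardinal.{u}) ≤ #(↥(K ∩ D))

/-- `φ(x, b)` divides over `A` : for some infinite `K ⊆ o(b/A)` and some `k`,
`{φ(x,c) : c ∈ K}` is `k`-inconsistent. -/
def Divides {m n : ℕ} (φ : L.Formula (Fin m ⊕ Fin n)) (b : Fin n → U) (A : Set U) : Prop :=
  ∃ K : Set (Fin n → U), K ⊆ oTuple L U A b ∧ K.Infinite ∧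
    ∃ k : ℕ, ∀ s : Finset (Fin n → U), ↑s ⊆ K → s.card = k →
      ¬∃ x : Fin m → U, ∀ c ∈ s, φ.Realize (Sum.elim x c)

/-- `C` is pseudo-invariant over `A` : `e(C)` locally covers `o(b/A)` for every `b ∈ C`. -/
def PseudoInv {k : ℕ} (A : Set U) (C : Set (Fin k → U)) : Prop :=
  ∀ b ∈ C, LocallyCovers (#U) (eSet L U (∅ : Set U) C) (oTuple L U A b)

/-- A family `u` of subsets of `U^n` is closed: it is cut out by a set of sentences with a
second-order variable, i.e. sentences of the language expanded by a predicate. -/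
def ClosedFam {n : ℕ} (u : Set (Set (Fin n → U))) : Prop :=
  ∃ p : Set ((expLang L n).Sentence),
    u = {D | ∀ φ ∈ p, SentRealize U (expStr L U D) φ}

/-- `κ` is a Ramsey cardinal : every `2`-coloring of the finite subsets of a set of size `κ`
has a homogeneous set of size `κ`. -/
def IsRamseyCard (κ : Cardinal.{u}) : Prop :=
  ∀ (X : Type u), #X = κ → ∀ c : Finset X → Bool,
    ∃ H : Set X, #H = κ ∧
      ∀ s t : Finset X, ↑s ⊆ H → ↑t ⊆ H → s.card = t.card → c s = c t

/-- The formula `φ(x,z)` is NIP: the family of its instances `φ(a,U)` has finite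
VC dimension. -/
def FormulaNIP {m n : ℕ} (φ : L.Formula (Fin m ⊕ Fin n)) : Prop :=
  FiniteVC {E : Set (Fin n → U) | ∃ b : Fin m → U, E = phiSet L U φ b}

/-- The theory of `U` is NIP: every formula is NIP. -/
def TheoryNIP : Prop :=
  ∀ (m n : ℕ) (φ : L.Formula (Fin m ⊕ Fin n)), FormulaNIP L U φ

/-- A global type `p(z)` is invariant over `A` : each of the sets `D_{p,φ}` is fixed
(setwise) by every automorphism fixing `A` pointwise. -/
def GlobalTypeInv {n : ℕ} (A : Set U) (p : Set ((L[[U]]).Formula (Fin n))) : Prop :=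
  ∀ (k : ℕ) (φ : L.Formula (Fin n ⊕ Fin k)) (f : U ≃[L] U), f ∈ AutFix L U A →
    imgSet L U f {a | instFormula L U φ a ∈ p} = {a | instFormula L U φ a ∈ p}

/-- `M` (a subset of `U`) is `L(A;C)`-saturated : every finitely realized type `p(x) ⊆ L(A;C)`
is realized by a tuple from `M`. -/
def LACSat {n : ℕ} (C : Set (Fin n → U)) (A : Set U) (M : Set U) : Prop :=
  ∀ (m : ℕ) (p : Set (((expLang L n)[[↥A]]).Formula (Fin m))),
    (∀ s : Finset (((expLang L n)[[↥A]]).Formula (Fin m)), ↑s ⊆ p →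
      ∃ b : Fin m → U, ∀ φ ∈ s, FRealize U (addConsts U (expStr L U C) A) φ b) →
    ∃ b : Fin m → U, (∀ i, b i ∈ M) ∧
      ∀ φ ∈ p, FRealize U (addConsts U (expStr L U C) A) φ b

/-- The inclusion of languages `L(M) → L(U)` for `M : Set U`. -/
def liftConsts (M : Set U) : (L[[↥M]]) →ᴸ (L[[U]]) :=
  LHom.sumMap (LHom.id L) (LHom.constantsOnMap Subtype.val)


section Aux

variable {L} {U}

lemma aux_frealize_eq {m : ℕ} (ψ : (L[[U]]).Formula (Fin m)) (b : Fin m → U) :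
    FRealize U (addAllConsts U iS) ψ b ↔ ψ.Realize b := Iff.rfl

lemma aux_realize_inst {m n : ℕ} (φ : L.Formula (Fin m ⊕ Fin n)) (a : Fin n → U)
    (b : Fin m → U) :
    FRealize U (addAllConsts U iS) (instFormula L U φ a) b ↔ φ.Realize (Sum.elim b a) := by
  rw [aux_frealize_eq, instFormula, Formula.Realize, BoundedFormula.realize_subst]
  have h : (fun i => Term.realize b
      (Sum.elim (fun i => Term.var i) (fun j => (L.con (a j)).term) i)) = Sum.elim b a := by
    funext i; cases i <;> rfl
  rw [h, ← Formula.Realize, LHom.realize_onFormula]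

/-- A set of formulas is finitely satisfiable. -/
def AuxFinSat {m : ℕ} (p : Set ((L[[U]]).Formula (Fin m))) : Prop :=
  ∀ s : Finset ((L[[U]]).Formula (Fin m)), ↑s ⊆ p →
    ∃ b : Fin m → U, ∀ ψ ∈ s, ψ.Realize b

lemma aux_exists_global {m : ℕ} (p : Set ((L[[U]]).Formula (Fin m)))
    (hp : AuxFinSat p) : ∃ q, p ⊆ q ∧ IsGlobalType L U q := by
  classical
  obtain ⟨q, hpq, hq⟩ := zorn_subset_nonempty {r | AuxFinSat r}
    (fun c hcS hchain hcne => by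
      refine ⟨⋃₀ c, fun s hs => ?_, fun r hr => subset_sUnion_of_mem hr⟩
      rw [sUnion_eq_biUnion] at hs
      obtain ⟨r, hrc, hsr⟩ := DirectedOn.exists_mem_subset_of_finset_subset_biUnion hcne
        hchain.directedOn hs
      exact hcS hrc s hsr) p hp
  have hqfs : AuxFinSat q := hq.prop
  have hcons : ∀ ψ : (L[[U]]).Formula (Fin m), ψ ∈ q → ψ.not ∈ q → False := by
    intro ψ h1 h2
    obtain ⟨b, hb⟩ := hqfs {ψ, ψ.not} (by
      intro χ hχ
      simp only [Finset.coe_insert, Finset.coe_singleton, mem_insert_iff,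
        mem_singleton_iff] at hχ
      rcases hχ with rfl | rfl <;> assumption)
    exact Formula.realize_not.mp (hb ψ.not (by simp)) (hb ψ (by simp))
  refine ⟨q, hpq, fun s hs => (hqfs s hs).imp (fun b hb ψ h => hb ψ h), fun ψ => ?_⟩
  constructor
  · intro hmem hnot
    exact hcons ψ hmem hnot
  · intro hnot
    by_contra hmem
    have key : AuxFinSat (insert ψ q) ∨ AuxFinSat (insert ψ.not q) := by
      by_contra h
      push_neg at h
      obtain ⟨h1, h2⟩ := h
      simp only [AuxFinSat, not_forall] at h1 h2
      obtain ⟨s1, hs1, hns1⟩ := h1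
      obtain ⟨s2, hs2, hns2⟩ := h2
      obtain ⟨b, hb⟩ := hqfs ((s1.erase ψ) ∪ (s2.erase ψ.not)) (by
        intro χ hχ
        simp only [Finset.coe_union, Finset.coe_erase, mem_union, mem_diff,
          mem_singleton_iff] at hχ
        rcases hχ with ⟨hχ, hne⟩ | ⟨hχ, hne⟩
        · rcases hs1 hχ with h | h
          · exact absurd h hne
          · exact h
        · rcases hs2 hχ with h | h
          · exact absurd h hne
          · exact h)
      by_cases hr : ψ.Realize b
      · refine hns1 ⟨b, fun χ hχ => ?_⟩
        by_cases he : χ = ψ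
        · exact he ▸ hr
        · exact hb χ (Finset.mem_union_left _ (Finset.mem_erase.mpr ⟨he, hχ⟩))
      · refine hns2 ⟨b, fun χ hχ => ?_⟩
        by_cases he : χ = ψ.not
        · exact he ▸ Formula.realize_not.mpr hr
        · exact hb χ (Finset.mem_union_right _ (Finset.mem_erase.mpr ⟨he, hχ⟩))
    rcases key with hk | hk
    · exact hmem (hq.2 hk (subset_insert ψ q) (mem_insert ψ q))
    · exact hnot (hq.2 hk (subset_insert ψ.not q) (mem_insert ψ.not q))

end Aux

/-- `D` is approximable by some formula iff `D` is externally definable. -/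
theorem stmt1 (L : FirstOrder.Language.{u, u}) (U : Type u) [iS : L.Structure U]
    (hsat : IsSatStr U iS) (hinacc : Cardinal.IsInaccessible #U) (hcard : L.card < #U)
    (n : ℕ) (D : Set (Fin n → U)) :
    Approximable L U D ↔ ExtDefinable L U D := by
  classical
  constructor
  · rintro ⟨m, φ, hφ⟩
    set base : Set ((L[[U]]).Formula (Fin m)) :=
      ((fun a => instFormula L U φ a) '' D) ∪
        ((fun a => (instFormula L U φ a).not) '' Dᶜ) with hbase
    have hfin : AuxFinSat base := by
      intro s hs
      have hw : ∀ ψ ∈ s, ∃ a : Fin n → U,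
          (a ∈ D ∧ ψ = instFormula L U φ a) ∨ (a ∉ D ∧ ψ = (instFormula L U φ a).not) := by
        intro ψ hψ
        rcases hs hψ with ⟨a, ha, rfl⟩ | ⟨a, ha, rfl⟩
        · exact ⟨a, Or.inl ⟨ha, rfl⟩⟩
        · exact ⟨a, Or.inr ⟨ha, rfl⟩⟩
      choose w hwspec using hw
      set B : Finset U := s.attach.biUnion
        (fun ψ => Finset.image (w ψ.1 ψ.2) Finset.univ) with hB
      obtain ⟨b, hb⟩ := hφ B
      refine ⟨b, fun ψ hψ => ?_⟩
      have hmemB : w ψ hψ ∈ tuplesIn U (↑B : Set U) := by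
        intro i
        simp only [hB, Finset.coe_biUnion, Finset.mem_coe, Finset.mem_attach,
          mem_iUnion, Finset.coe_image, mem_image, Finset.mem_coe]
        exact ⟨⟨ψ, hψ⟩, trivial, by simp⟩
      rcases hwspec ψ hψ with ⟨haD, heq⟩ | ⟨haD, heq⟩
      · have hthis : w ψ hψ ∈ phiSet L U φ b ∩ tuplesIn U ↑B := by
          rw [hb]; exact ⟨haD, hmemB⟩
        have : (instFormula L U φ (w ψ hψ)).Realize b :=
          (aux_realize_inst φ _ b).mpr hthis.1
        exact heq ▸ this
      · have hnot : w ψ hψ ∉ phiSet L U φ b := by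
          intro hmem
          have : w ψ hψ ∈ D ∩ tuplesIn U ↑B := by
            rw [← hb]; exact ⟨hmem, hmemB⟩
          exact haD this.1
        have : ((instFormula L U φ (w ψ hψ)).not).Realize b :=
          Formula.realize_not.mpr (fun hr => hnot ((aux_realize_inst φ _ b).mp hr))
        exact heq ▸ this
    obtain ⟨q, hbq, hq⟩ := aux_exists_global base hfin
    refine ⟨m, φ, q, hq, ?_⟩
    ext a
    constructor
    · intro ha
      exact hbq (Or.inl ⟨a, ha, rfl⟩)
    · intro ha
      by_contra haD
      have hnotin : (instFormula L U φ a).not ∈ q := hbq (Or.inr ⟨a, haD, rfl⟩)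
      exact (hq.2 (instFormula L U φ a)).mp ha hnotin
  · rintro ⟨m, φ, p, ⟨hfs, hcomp⟩, hD⟩
    refine ⟨m, φ, fun B => ?_⟩
    set s : Finset ((L[[U]]).Formula (Fin m)) :=
      (Fintype.piFinset fun _ : Fin n => B).image fun a =>
        if a ∈ D then instFormula L U φ a else (instFormula L U φ a).not with hs
    have hsub : ↑s ⊆ p := by
      intro ψ hψ
      simp only [hs, Finset.coe_image, mem_image, Finset.mem_coe] at hψ
      obtain ⟨a, _, rfl⟩ := hψ
      by_cases ha : a ∈ D
      · simp only [ha, if_true]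
        have : a ∈ {a | instFormula L U φ a ∈ p} := hD ▸ ha
        exact this
      · simp only [ha, if_false]
        have hnp : instFormula L U φ a ∉ p := fun h => ha (hD ▸ (h : a ∈ {a | _ ∈ p}))
        exact not_not.mp (fun h => hnp ((hcomp _).mpr h))
    obtain ⟨b, hb⟩ := hfs s hsub
    refine ⟨b, ?_⟩
    ext a
    constructor
    · rintro ⟨hph, htp⟩
      refine ⟨?_, htp⟩
      by_contra haD
      have hmem : (instFormula L U φ a).not ∈ s := by
        simp only [hs, Finset.mem_image]
        exact ⟨a, Fintype.mem_piFinset.mpr htp, by simp [haD]⟩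
      have := hb _ hmem
      rw [aux_frealize_eq, Formula.realize_not] at this
      exact this ((aux_realize_inst φ a b).mpr hph)
    · rintro ⟨haD, htp⟩
      refine ⟨?_, htp⟩
      have hmem : instFormula L U φ a ∈ s := by
        simp only [hs, Finset.mem_image]
        exact ⟨a, Fintype.mem_piFinset.mpr htp, by simp [haD]⟩
      have := hb _ hmem
      rw [aux_frealize_eq] at this
      exact (aux_realize_inst φ a b).mp this

end Paper
end

section
/- Assume that the orbit o(D/A) of D under Aut(U/A) has finite VC-dimension, and let ⟨a_i : i < ω⟩ be any A-indiscernible sequence of |z|-tuples. Then the sequence of truth values ⟨a_i ∈ D : i < ω⟩ converges, i.e., is eventually constant. -/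
/-!
If the truth values `a i ∈ D` do not stabilise, both values occur infinitely often, so every
pattern of truth values is realised along some subsequence `a ∘ φ`. By indiscernibility,
`(a (φ t))_{t < N}` and `(a t)_{t < N}` have the same type over `A`; a saturated model of regular
cardinality is strongly homogeneous (back and forth along an enumeration of `U` in order type
`#U`), so an automorphism over `A` maps the first tuple to the second. It moves `D` to a member of
`o(D/A)` whose trace on `{a t : t < N}` is the prescribed one. As the `a t` are pairwise distinct
(again by indiscernibility), `o(D/A)` shatters sets of every finite size.
-/

namespace Paper

open FirstOrder Language Cardinal Set

universe u

variable (L : FirstOrder.Language.{u, u}) (U : Type u) [iS : L.Structure U]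

variable {L U}

open Filter

theorem realize_addConsts_iff {A : Set U} {β : Type*} (φ : (L[[↥A]]).Formula β) (v : β → U) :
    FRealize U (addConsts U iS A) φ v ↔
      Formula.Realize (BoundedFormula.constantsVarsEquiv φ) (Sum.elim Subtype.val v) :=
  (BoundedFormula.realize_constantsVarsEquiv (M := U) (L := L) (α := ↥A) (xs := default)).symm

variable (L) in
def IsPartialElementary (p : Set (U × U)) : Prop :=
  ∀ φ : L.Formula p, φ.Realize (fun x => x.1.1) ↔ φ.Realize (fun x => x.1.2)

namespace IsPartialElementary

variable {p : Set (U × U)}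

theorem realize_iff (h : IsPartialElementary L p) {α : Type*} (t : α → p) (φ : L.Formula α) :
    φ.Realize (fun i => (t i).1.1) ↔ φ.Realize (fun i => (t i).1.2) := by
  have := h (φ.relabel t)
  rwa [Formula.realize_relabel, Formula.realize_relabel] at this

theorem image_swap (h : IsPartialElementary L p) : IsPartialElementary L (Prod.swap '' p) :=
  fun φ => (h.realize_iff (fun x => ⟨x.1.swap, by
    simpa [Set.image_swap_eq_preimage_swap] using x.2⟩) φ).symm

theorem fst_eq_iff (h : IsPartialElementary L p) {x y : U × U} (hx : x ∈ p) (hy : y ∈ p) :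
    x.1 = y.1 ↔ x.2 = y.2 := by
  simpa using h.realize_iff ![⟨x, hx⟩, ⟨y, hy⟩] ((Term.var 0).equal (Term.var 1))

theorem iUnion {ι : Type*} {f : ι → Set (U × U)} (hf : Directed (· ⊆ ·) f)
    (h : ∀ i, IsPartialElementary L (f i)) : IsPartialElementary L (⋃ i, f i) := by
  classical
  intro φ
  cases isEmpty_or_nonempty ι
  · have : IsEmpty (⋃ i, f i) := by simp
    exact iff_of_eq (congrArg _ (Subsingleton.elim _ _))
  obtain ⟨i, hi⟩ := hf.exists_mem_subset_of_finset_subset_biUnion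
    (s := φ.freeVarFinset.image Subtype.val) fun x hx => by
      obtain ⟨y, -, rfl⟩ := Finset.mem_image.1 hx
      exact y.2
  let g : φ.freeVarFinset → f i := fun x => ⟨x.1.1, hi (Finset.mem_image_of_mem _ x.2)⟩
  simp only [Formula.Realize]
  rw [← BoundedFormula.realize_restrictFreeVar (f := g) (v := fun x => x.1.1) _ fun _ => rfl,
    ← BoundedFormula.realize_restrictFreeVar (f := g) (v := fun x => x.1.2) _ fun _ => rfl]
  exact h i _

theorem union_iUnion {ι : Type*} {f : ι → Set (U × U)} (h₀ : IsPartialElementary L p)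
    (hf : Directed (· ⊆ ·) f) (h : ∀ i, IsPartialElementary L (f i)) (hp : ∀ i, p ⊆ f i) :
    IsPartialElementary L (p ∪ ⋃ i, f i) := by
  cases isEmpty_or_nonempty ι
  · simpa using h₀
  · rw [Set.union_eq_right.2 ((hp (Classical.arbitrary ι)).trans (Set.subset_iUnion f _))]
    exact iUnion hf h

theorem exists_realize_snd (h : IsPartialElementary L p) {γ : Type*} [Finite γ]
    {ψ : L.Formula (γ ⊕ p)} {b : γ → U} (hψ : ψ.Realize (Sum.elim b fun x => x.1.1)) :
    ∃ c : γ → U, ψ.Realize (Sum.elim c fun x => x.1.2) := by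
  have hex := (h ((ψ.relabel Sum.swap).iExs γ)).1 (Formula.realize_iExs.2 ⟨b, by
    rwa [Formula.realize_relabel, Sum.elim_swap]⟩)
  obtain ⟨c, hc⟩ := Formula.realize_iExs.1 hex
  exact ⟨c, by rwa [Formula.realize_relabel, Sum.elim_swap] at hc⟩

theorem exists_realize_iff (hsat : IsSatStr U iS) (h : IsPartialElementary L p) (hp : #p < #U)
    (u : U) : ∃ w : Fin 1 → U, ∀ ψ : L.Formula (Fin 1 ⊕ p),
      ψ.Realize (Sum.elim (fun _ => u) fun x => x.1.1) ↔ ψ.Realize (Sum.elim w fun x => x.1.2) := by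
  let B := Prod.snd '' p
  let c : p → B := fun x => ⟨x.1.2, Set.mem_image_of_mem _ x.2⟩
  let withParams : L.Formula (Fin 1 ⊕ p) → (L[[↥B]]).Formula (Fin 1) := fun ψ =>
    BoundedFormula.constantsVarsEquiv.symm (ψ.relabel (Sum.elim Sum.inr (Sum.inl ∘ c)))
  have realize_withParams : ∀ ψ w, FRealize U (addConsts U iS B) (withParams ψ) w ↔
      ψ.Realize (Sum.elim w fun x => x.1.2) := by
    intro ψ w
    rw [realize_addConsts_iff, Equiv.apply_symm_apply, Formula.realize_relabel]
    congr! 1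
    ext (i | x) <;> rfl
  let tp := {ψ : L.Formula (Fin 1 ⊕ p) | ψ.Realize (Sum.elim (fun _ => u) fun x => x.1.1)}
  obtain ⟨w, hw⟩ := hsat B (mk_image_le.trans_lt hp) 1 (withParams '' tp) fun s hs => by
    choose ψ hψ hψs using fun φ : s => hs φ.2
    obtain ⟨w, hw⟩ := h.exists_realize_snd (ψ := Formula.iInf ψ)
      (Formula.realize_iInf.2 fun φ => hψ φ)
    refine ⟨w, fun φ hφ => ?_⟩
    have := realize_withParams (ψ ⟨φ, hφ⟩) w
    rw [hψs] at this
    exact this.2 (Formula.realize_iInf.1 hw _)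
  refine ⟨w, fun ψ => ⟨fun hψ => (realize_withParams ψ w).1 (hw _ ⟨ψ, hψ, rfl⟩), fun hψ => ?_⟩⟩
  by_contra hnψ
  exact (realize_withParams ψ.not w).1 (hw _ ⟨ψ.not, hnψ, rfl⟩) hψ

theorem exists_insert (hsat : IsSatStr U iS) (h : IsPartialElementary L p) (hp : #p < #U)
    (u : U) : ∃ v, IsPartialElementary L (insert (u, v) p) := by
  classical
  obtain ⟨w, hw⟩ := h.exists_realize_iff hsat hp u
  refine ⟨w 0, fun φ => ?_⟩
  let ρ : ↥(insert (u, w 0) p) → Fin 1 ⊕ p := fun x =>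
    if hx : x.1 ∈ p then .inr ⟨x.1, hx⟩ else .inl 0
  have hρ : ∀ (g : U × U → U) (b : Fin 1 → U), b 0 = g (u, w 0) →
      (Sum.elim b fun y : p => g y.1) ∘ ρ = fun x => g x.1 := by
    intro g b hb
    ext ⟨x, hx⟩
    by_cases hxp : x ∈ p
    · simp [ρ, hxp]
    · obtain rfl := hx.resolve_right hxp
      simp [ρ, hxp, hb]
  have := hw (φ.relabel ρ)
  rwa [Formula.realize_relabel, Formula.realize_relabel, hρ Prod.fst _ rfl,
    hρ Prod.snd w rfl] at this

theorem exists_insert_insert (hsat : IsSatStr U iS) (hU : ℵ₀ ≤ #U)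
    (h : IsPartialElementary L p) (hp : #p < #U) (u : U) :
    ∃ v w, IsPartialElementary L (insert (w, u) (insert (u, v) p)) := by
  obtain ⟨v, hv⟩ := h.exists_insert hsat hp u
  have hcard : #(insert (u, v) p : Set (U × U)) < #U :=
    mk_insert_le.trans_lt (add_lt_of_lt hU hp (one_lt_aleph0.trans_le hU))
  obtain ⟨w, hw⟩ := hv.image_swap.exists_insert hsat (mk_image_le.trans_lt hcard) u
  refine ⟨v, w, ?_⟩
  simpa [Set.image_insert_eq, Set.image_image] using hw.image_swap

end IsPartialElementary

section BackAndForth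

variable {p p₀ : Set (U × U)}

variable (L) in
noncomputable def backForthExtend (p : Set (U × U)) (u : U) : Set (U × U) :=
  let vw : U × U := @Classical.epsilon _ (Nonempty.intro (u, u)) fun vw =>
    IsPartialElementary L (insert (vw.2, u) (insert (u, vw.1) p))
  insert (vw.2, u) (insert (u, vw.1) p)

theorem subset_backForthExtend (u : U) : p ⊆ backForthExtend L p u :=
  (Set.subset_insert _ _).trans (Set.subset_insert _ _)

theorem mk_backForthExtend_lt (hU : ℵ₀ ≤ #U) (hp : #p < #U) (u : U) :
    #(backForthExtend L p u) < #U := by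
  have h1 : (1 : Cardinal) < #U := one_lt_aleph0.trans_le hU
  exact mk_insert_le.trans_lt (add_lt_of_lt hU (mk_insert_le.trans_lt (add_lt_of_lt hU hp h1)) h1)

theorem IsPartialElementary.backForthExtend (hsat : IsSatStr U iS) (hU : ℵ₀ ≤ #U)
    (h : IsPartialElementary L p) (hp : #p < #U) (u : U) :
    IsPartialElementary L (backForthExtend L p u) := by
  obtain ⟨v, w, hvw⟩ := h.exists_insert_insert hsat hU hp u
  exact Classical.epsilon_spec (p := fun vw : U × U =>
    IsPartialElementary L (insert (vw.2, u) (insert (u, vw.1) p))) ⟨(v, w), hvw⟩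

variable {W : Type*} [LinearOrder W] [WellFoundedLT W]

variable (L) in
noncomputable def backForthChain (p₀ : Set (U × U)) (e : W → U) : W → Set (U × U) :=
  wellFounded_lt.fix fun w G => backForthExtend L (p₀ ∪ ⋃ v : Iio w, G v v.2) (e w)

theorem backForthChain_eq (e : W → U) (w : W) :
    backForthChain L p₀ e w =
      backForthExtend L (p₀ ∪ ⋃ v : Iio w, backForthChain L p₀ e v) (e w) :=
  wellFounded_lt.fix_eq _ _

theorem subset_backForthChain (e : W → U) (w : W) : p₀ ⊆ backForthChain L p₀ e w := by
  rw [backForthChain_eq]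
  exact Set.subset_union_left.trans (subset_backForthExtend _)

theorem exists_mk_mem_backForthChain (e : W → U) (w : W) :
    ∃ v, (e w, v) ∈ backForthChain L p₀ e w := by
  rw [backForthChain_eq]
  exact ⟨_, Set.mem_insert_of_mem _ (Set.mem_insert _ _)⟩

theorem exists_mem_backForthChain_mk (e : W → U) (w : W) :
    ∃ v, (v, e w) ∈ backForthChain L p₀ e w := by
  rw [backForthChain_eq]
  exact ⟨_, Set.mem_insert _ _⟩

theorem backForthChain_mono (e : W → U) : Monotone (backForthChain L p₀ e) := by
  intro v w hvw
  rcases hvw.lt_or_eq with hvw | rfl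
  · rw [backForthChain_eq e w]
    exact (Set.subset_iUnion (fun v : Iio w => backForthChain L p₀ e v) ⟨v, hvw⟩).trans
      (Set.subset_union_right.trans (subset_backForthExtend (L := L) (e w)))
  · rfl

theorem IsPartialElementary.exists_total (hsat : IsSatStr U iS) (hU : (#U).IsRegular)
    (h₀ : IsPartialElementary L p₀) (hp₀ : #p₀ < #U) :
    ∃ P, p₀ ⊆ P ∧ IsPartialElementary L P ∧ (∀ x, ∃ y, (x, y) ∈ P) ∧ ∀ y, ∃ x, (x, y) ∈ P := by
  obtain ⟨e⟩ : Nonempty ((#U).ord.ToType ≃ U) := Cardinal.eq.1 (mk_ord_toType _)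
  let G := backForthChain L p₀ e
  have hG : ∀ w, IsPartialElementary L (G w) ∧ #(G w) < #U := by
    intro w
    induction w using WellFoundedLT.induction with | _ w ih =>
      have hbase : IsPartialElementary L (p₀ ∪ ⋃ v : Iio w, G v) :=
        h₀.union_iUnion ((backForthChain_mono e).comp (Subtype.mono_coe _)).directed_le
          (fun v => (ih v v.2).1) fun v => subset_backForthChain e v
      have hcard : #(p₀ ∪ ⋃ v : Iio w, G v : Set (U × U)) < #U :=
        (mk_union_le _ _).trans_lt <| add_lt_of_lt hU.aleph0_le hp₀ <|
          (card_iUnion_lt_iff_forall_of_isRegular hU (by simpa using mk_Iio_lt w)).2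
            fun v => (ih v v.2).2
      rw [show G w = _ from backForthChain_eq e w]
      exact ⟨hbase.backForthExtend hsat hU.aleph0_le hcard _,
        mk_backForthExtend_lt hU.aleph0_le hcard _⟩
  have hGP : ∀ w, G w ⊆ p₀ ∪ ⋃ w, G w := fun w =>
    (Set.subset_iUnion G w).trans Set.subset_union_right
  refine ⟨p₀ ∪ ⋃ w, G w, Set.subset_union_left,
    h₀.union_iUnion (backForthChain_mono e).directed_le (fun w => (hG w).1)
      (subset_backForthChain e), fun x => ?_, fun y => ?_⟩
  · obtain ⟨y, hy⟩ := exists_mk_mem_backForthChain (L := L) (p₀ := p₀) e (e.symm x)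
    rw [e.apply_symm_apply] at hy
    exact ⟨y, hGP _ hy⟩
  · obtain ⟨x, hx⟩ := exists_mem_backForthChain_mk (L := L) (p₀ := p₀) e (e.symm y)
    rw [e.apply_symm_apply] at hx
    exact ⟨x, hGP _ hx⟩

end BackAndForth

theorem IsPartialElementary.exists_equiv {P : Set (U × U)} (h : IsPartialElementary L P)
    (htot : ∀ x, ∃ y, (x, y) ∈ P) (hsurj : ∀ y, ∃ x, (x, y) ∈ P) :
    ∃ f : U ≃[L] U, ∀ x ∈ P, f x.1 = x.2 := by
  choose g hg using htot
  let f : U ↪ₑ[L] U :=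
    ⟨g, fun _ φ x => (h.realize_iff (fun i => ⟨(x i, g (x i)), hg _⟩) φ).symm⟩
  have hfP : ∀ x ∈ P, f x.1 = x.2 := fun x hx => (h.fst_eq_iff (hg x.1) hx).1 rfl
  have hf : Function.Surjective f := fun y =>
    let ⟨x, hx⟩ := hsurj y
    ⟨x, hfP _ hx⟩
  exact ⟨⟨Equiv.ofBijective f ⟨f.injective, hf⟩, f.map_fun, f.map_rel⟩, hfP⟩

theorem exists_autFix_comp_eq (hsat : IsSatStr U iS) (hU : (#U).IsRegular) {A : Set U}
    (hA : #A < #U) {β : Type*} [Finite β] {b c : β → U}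
    (htp : ∀ φ : (L[[↥A]]).Formula β,
      FRealize U (addConsts U iS A) φ b ↔ FRealize U (addConsts U iS A) φ c) :
    ∃ f ∈ AutFix L U A, ⇑f ∘ b = c := by
  let g : A ⊕ β → U × U := Sum.elim (fun a => (a, a)) fun i => (b i, c i)
  have hg : ∀ x : range g, x.1 = g (rangeSplitting g x) := fun x =>
    (apply_rangeSplitting g x).symm
  have h₀ : IsPartialElementary L (range g) := fun φ => by
    have := htp (BoundedFormula.constantsVarsEquiv.symm (φ.relabel (rangeSplitting g)))
    rw [realize_addConsts_iff, realize_addConsts_iff, Equiv.apply_symm_apply,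
      Formula.realize_relabel, Formula.realize_relabel] at this
    convert this using 2 <;> ext x <;> rw [hg x, Function.comp_apply] <;>
      generalize rangeSplitting g x = y <;> cases y <;> rfl
  have hcard : #(range g) < #U := by
    rw [Set.Sum.elim_range]
    exact (mk_union_le _ _).trans_lt (add_lt_of_lt hU.aleph0_le (mk_range_le.trans_lt hA)
      ((Set.finite_range _).lt_aleph0.trans_le hU.aleph0_le))
  obtain ⟨P, hP, hPe, htot, hsurj⟩ := h₀.exists_total hsat hU hcard
  obtain ⟨f, hf⟩ := hPe.exists_equiv htot hsurj
  exact ⟨f, fun a ha => hf _ (hP ⟨.inl ⟨a, ha⟩, rfl⟩), funext fun i => hf _ (hP ⟨.inr i, rfl⟩)⟩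

section Indiscernible

variable {n : ℕ} {A : Set U}

theorem IndiscOver.exists_autFix {I : Type*} [LinearOrder I] {a : I → Fin n → U}
    (hsat : IsSatStr U iS) (hU : (#U).IsRegular) (hA : #A < #U) (ha : IndiscOver L U A a)
    {k : ℕ} {i j : Fin k → I} (hi : StrictMono i) (hj : StrictMono j) :
    ∃ f ∈ AutFix L U A, ∀ t, ⇑f ∘ a (i t) = a (j t) := by
  obtain ⟨f, hf, hfa⟩ := exists_autFix_comp_eq hsat hU hA (ha k i j hi hj)
  exact ⟨f, hf, fun t => funext fun m => congrFun hfa (t, m)⟩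

theorem IndiscOver.injective {I : Type*} [LinearOrder I] {a : I → Fin n → U}
    (hsat : IsSatStr U iS) (hU : (#U).IsRegular) (hA : #A < #U) (ha : IndiscOver L U A a)
    {i j : I} (hij : i < j) (hne : a i ≠ a j) : Function.Injective a := by
  have hpair : ∀ {s t : I}, s < t → StrictMono ![s, t] := fun hst =>
    Fin.strictMono_iff_lt_succ.2 fun k => by fin_cases k; simpa using hst
  intro s t hst
  by_contra hst'
  wlog hlt : s < t generalizing s t
  · exact this hst.symm (Ne.symm hst') ((Ne.symm hst').lt_of_le (not_lt.1 hlt))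
  obtain ⟨f, -, hf⟩ := ha.exists_autFix hsat hU hA (hpair hlt) (hpair hij)
  have hs : ⇑f ∘ a s = a i := hf 0
  have ht : ⇑f ∘ a t = a j := hf 1
  exact hne (by rw [← hs, ← ht, hst])

theorem IndiscOver.shatters_oSet {a : ℕ → Fin n → U} (hsat : IsSatStr U iS)
    (hU : (#U).IsRegular) (hA : #A < #U) (ha : IndiscOver L U A a) {D : Set (Fin n → U)}
    (hfreq : ∀ q : Prop, ∃ᶠ i in atTop, (a i ∈ D ↔ q)) (N : ℕ) :
    Shatters (oSet L U A D) (a '' Iio N) := by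
  intro H hH
  obtain ⟨φ, hφ, hφD⟩ := extraction_forall_of_frequently fun t => hfreq (a t ∈ H)
  obtain ⟨f, hf, hfa⟩ := ha.exists_autFix hsat hU hA (i := fun t : Fin N => φ t) (j := (↑))
    (hφ.comp Fin.val_strictMono) Fin.val_strictMono
  have hfD : ∀ t < N, a t ∈ imgSet L U f D ↔ a t ∈ H := fun t ht => by
    rw [← hφD t, ← hfa ⟨t, ht⟩]
    exact f.injective.comp_left.mem_set_image
  refine ⟨imgSet L U f D, ⟨f, hf, rfl⟩, Set.ext fun x => ⟨?_, fun hx => ?_⟩⟩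
  · rintro ⟨hxD, t, ht, rfl⟩
    exact (hfD t ht).1 hxD
  · obtain ⟨t, ht, rfl⟩ := hH hx
    exact ⟨(hfD t ht).2 hx, t, ht, rfl⟩

end Indiscernible

theorem stmt5_general (L : FirstOrder.Language.{u, u}) (U : Type u) [iS : L.Structure U]
    (hsat : IsSatStr U iS) (hinacc : Cardinal.IsInaccessible #U)
    (n : ℕ) (D : Set (Fin n → U)) (A : Set U) (hA : #A < #U)
    (hvc : FiniteVC (oSet L U A D))
    (a : ℕ → Fin n → U) (ha : IndiscOver L U A a) :
    ∃ N : ℕ, ∀ i ≥ N, ∀ j ≥ N, (a i ∈ D ↔ a j ∈ D) := by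
  by_contra hconst
  have hfreq : ∀ q : Prop, ∃ᶠ i in atTop, (a i ∈ D ↔ q) := fun q => by
    by_contra hq
    obtain ⟨N, hN⟩ := eventually_atTop.1 (not_frequently.1 hq)
    exact hconst ⟨N, fun i hi j hj => by have := hN i hi; have := hN j hj; tauto⟩
  have hU := hinacc.isRegular
  obtain ⟨i, hi⟩ := (hfreq True).exists
  obtain ⟨j, hij, hj⟩ := frequently_atTop'.1 (hfreq False) i
  have hinj := ha.injective hsat hU hA hij fun h => by simp_all
  obtain ⟨N, hN⟩ := hvc
  classical
  refine hN ((Finset.range N).image a)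
    (by rw [Finset.card_image_of_injective _ hinj, Finset.card_range]) ?_
  simpa using ha.shatters_oSet hsat hU hA hfreq N

/-- if `o(D/A)` has finite VC dimension then the truth values `a_i ∈ D` along
any `A`-indiscernible sequence are eventually constant. -/
theorem stmt5 (L : FirstOrder.Language.{u, u}) (U : Type u) [iS : L.Structure U]
    (hsat : IsSatStr U iS) (hinacc : Cardinal.IsInaccessible #U) (hcard : L.card < #U)
    (n : ℕ) (D : Set (Fin n → U)) (A : Set U) (hA : #A < #U)
    (hvc : FiniteVC (oSet L U A D))
    (a : ℕ → Fin n → U) (ha : IndiscOver L U A a) :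
    ∃ N : ℕ, ∀ i ≥ N, ∀ j ≥ N, (a i ∈ D ↔ a j ∈ D) :=
  stmt5_general L U (iS := iS) hsat hinacc n D A hA hvc a ha

end Paper
end
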